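/- arXiv:2210.02190 — 2 statements merged into one kernel-verified Lean document; each statement's English description precedes it below -/
import Mathlib

section
/- Single-source bound: for a source distribution S, target distribution T, target labeling function f_T : X → [0,1], pseudo-labeling function f_S : X → [0,1], and any hypothesis h : X → [0,1], the target risk satisfies E_{x~T}[|h(x) - f_T(x)|] ≤ E_{x~S}[|h(x) - f_S(x)|] + d1(S,T) + min{ E_{x~S}[|f_S(x) - f_T(x)|], E_{x~T}[|f_S(x) - f_T(x)|] }, where d1 is the L1-distance. -/
/-!
Pointwise, `|h - f_T| ≤ |h - f_S| + |f_S - f_T|`. Moving an expectation of a `[0,1]`-valued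
function from `T` to `S` costs at most `d1(S,T)/2`: by the layer-cake formula both expectations
are integrals over `t ∈ (0,1]` of the measures of the superlevel sets `{t ≤ g}`, and these
differ by at most `d1(S,T)/2`. Applying the triangle inequality under `T` and transferring
`|h - f_S|`, or transferring `|h - f_T|` and applying it under `S`, gives the two terms of the
minimum.
-/

open MeasureTheory Set

noncomputable def L1dist {X : Type*} [MeasurableSpace X] (D1 D2 : Measure X) : ℝ :=
  2 * ⨆ B : {s : Set X // MeasurableSet s}, |(D1 B.1).toReal - (D2 B.1).toReal|

lemma abs_sub_mem_Icc_zero_one {a b : ℝ} (ha : a ∈ Icc (0 : ℝ) 1)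
    (hb : b ∈ Icc (0 : ℝ) 1) : |a - b| ∈ Icc (0 : ℝ) 1 :=
  ⟨abs_nonneg _, abs_sub_le_of_nonneg_of_le ha.1 ha.2 hb.1 hb.2⟩

lemma integrable_of_mem_Icc {X : Type*} [MeasurableSpace X] (μ : Measure X) [IsFiniteMeasure μ]
    {g : X → ℝ} (hg : Measurable g) (hg01 : ∀ x, g x ∈ Icc (0 : ℝ) 1) : Integrable g μ :=
  .of_bound hg.aestronglyMeasurable 1 <| ae_of_all _ fun x =>
    abs_le.2 ⟨by linarith [(hg01 x).1], (hg01 x).2⟩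

lemma integral_abs_sub_le_add {X : Type*} [MeasurableSpace X] (μ : Measure X) {u v w : X → ℝ}
    (hu : Integrable u μ) (hv : Integrable v μ) (hw : Integrable w μ) :
    ∫ x, |u x - w x| ∂μ ≤ ∫ x, |u x - v x| ∂μ + ∫ x, |v x - w x| ∂μ :=
  calc ∫ x, |u x - w x| ∂μ ≤ ∫ x, (|u x - v x| + |v x - w x|) ∂μ :=
        integral_mono (hu.sub hw).abs ((hu.sub hv).abs.add (hv.sub hw).abs)
          fun x => abs_sub_le (u x) (v x) (w x)
    _ = ∫ x, |u x - v x| ∂μ + ∫ x, |v x - w x| ∂μ :=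
        integral_add (hu.sub hv).abs (hv.sub hw).abs

section L1dist

variable {X : Type*} [MeasurableSpace X] (S T : Measure X) [IsFiniteMeasure S] [IsFiniteMeasure T]

lemma abs_measureReal_sub_le_half_L1dist {B : Set X} (hB : MeasurableSet B) :
    |S.real B - T.real B| ≤ L1dist S T / 2 := by
  have hbdd : BddAbove (range fun B : {s : Set X // MeasurableSet s} =>
      |S.real B.1 - T.real B.1|) := by
    refine ⟨S.real univ + T.real univ, ?_⟩
    rintro _ ⟨B, rfl⟩
    have hSB : S.real B.1 ≤ S.real univ := measureReal_mono (subset_univ _)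
    have hTB : T.real B.1 ≤ T.real univ := measureReal_mono (subset_univ _)
    exact abs_sub_le_iff.2
      ⟨by linarith [measureReal_nonneg (μ := T) (s := B.1)],
        by linarith [measureReal_nonneg (μ := S) (s := B.1)]⟩
  rw [L1dist, mul_div_cancel_left₀ _ two_ne_zero]
  exact le_ciSup hbdd ⟨B, hB⟩

lemma L1dist_nonneg : 0 ≤ L1dist S T := by
  linarith [abs_nonneg (S.real ∅ - T.real ∅),
    abs_measureReal_sub_le_half_L1dist S T MeasurableSet.empty]

lemma integral_le_integral_add_half_L1dist {g : X → ℝ} (hg : Measurable g)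
    (hg01 : ∀ x, g x ∈ Icc (0 : ℝ) 1) :
    ∫ x, g x ∂T ≤ ∫ x, g x ∂S + L1dist S T / 2 := by
  have layerCake (μ : Measure X) [IsFiniteMeasure μ] :
      ∫ x, g x ∂μ = ∫ t in Ioc (0 : ℝ) 1, μ.real {a | t ≤ g a} :=
    (integrable_of_mem_Icc μ hg hg01).integral_eq_integral_Ioc_meas_le
      (ae_of_all _ fun x => (hg01 x).1) (ae_of_all _ fun x => (hg01 x).2)
  have integrableOn_superlevel (μ : Measure X) [IsFiniteMeasure μ] :
      IntegrableOn (fun t => μ.real {a | t ≤ g a}) (Ioc (0 : ℝ) 1) := by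
    have hanti : Antitone fun t => μ.real {a | t ≤ g a} :=
      fun _ _ hst => measureReal_mono fun _ hx => hst.trans hx
    exact ((hanti.antitoneOn _).integrableOn_isCompact isCompact_Icc).mono_set
      Ioc_subset_Icc_self
  have hsuperlevel (t : ℝ) :
      T.real {a | t ≤ g a} ≤ S.real {a | t ≤ g a} + L1dist S T / 2 := by
    have := abs_measureReal_sub_le_half_L1dist S T
      (measurableSet_le (measurable_const (a := t)) hg)
    linarith [neg_abs_le (S.real {a | t ≤ g a} - T.real {a | t ≤ g a})]
  calc ∫ x, g x ∂T = ∫ t in Ioc (0 : ℝ) 1, T.real {a | t ≤ g a} := layerCake T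
    _ ≤ ∫ t in Ioc (0 : ℝ) 1, (S.real {a | t ≤ g a} + L1dist S T / 2) :=
        setIntegral_mono (integrableOn_superlevel T)
          ((integrableOn_superlevel S).add (integrable_const _)) hsuperlevel
    _ = ∫ x, g x ∂S + L1dist S T / 2 := by
        rw [integral_add (integrableOn_superlevel S) (integrable_const _), layerCake S]
        simp

end L1dist

theorem stmt_3 {X : Type*} [MeasurableSpace X]
    (S T : Measure X) [IsProbabilityMeasure S] [IsProbabilityMeasure T]
    (h fS fT : X → ℝ) (hh : Measurable h) (hfS : Measurable fS) (hfT : Measurable fT)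
    (hh01 : ∀ x, h x ∈ Icc (0:ℝ) 1) (hfS01 : ∀ x, fS x ∈ Icc (0:ℝ) 1)
    (hfT01 : ∀ x, fT x ∈ Icc (0:ℝ) 1) :
    ∫ x, |h x - fT x| ∂T ≤
      ∫ x, |h x - fS x| ∂S + L1dist S T +
        min (∫ x, |fS x - fT x| ∂S) (∫ x, |fS x - fT x| ∂T) := by
  have transfer {u v : X → ℝ} (hu : Measurable u) (hv : Measurable v)
      (hu01 : ∀ x, u x ∈ Icc (0:ℝ) 1) (hv01 : ∀ x, v x ∈ Icc (0:ℝ) 1) :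
      ∫ x, |u x - v x| ∂T ≤ ∫ x, |u x - v x| ∂S + L1dist S T / 2 :=
    integral_le_integral_add_half_L1dist S T (hu.sub hv).abs
      fun x => abs_sub_mem_Icc_zero_one (hu01 x) (hv01 x)
  have triangle (μ : Measure X) [IsFiniteMeasure μ] :=
    integral_abs_sub_le_add μ (integrable_of_mem_Icc μ hh hh01)
      (integrable_of_mem_Icc μ hfS hfS01) (integrable_of_mem_Icc μ hfT hfT01)
  have hd := L1dist_nonneg S T
  rcases le_total (∫ x, |fS x - fT x| ∂S) (∫ x, |fS x - fT x| ∂T) with hle | hle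
  · rw [min_eq_left hle]
    linarith [transfer hh hfT hh01 hfT01, triangle S]
  · rw [min_eq_right hle]
    linarith [transfer hh hfS hh01 hfS01, triangle T]
end

section
/- Decomposed-server bound (Theorem 2 of the paper): if the server distribution S is a mixture S = Σ_k λ_k S_k of distributions S_k with per-component pseudo-labeling functions f̂_{s_k} : X → [0,1], then for any hypothesis h : X → [0,1], Σ_k λ_k E_{x~T_k}[|h(x) - f_k(x)|] ≤ Σ_k λ_k E_{x~S_k}[|h(x) - f̂_{s_k}(x)|] + Σ_k λ_k d1(S_k, T_k) + min{ Σ_k λ_k E_{x~S_k}[|f̂_{s_k}(x) - f_k(x)|], Σ_k λ_k E_{x~T_k}[|f̂_{s_k}(x) - f_k(x)|] }. -/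
open MeasureTheory Set

lemma bdd_sup {X : Type*} [MeasurableSpace X] (S T : Measure X)
    [IsProbabilityMeasure S] [IsProbabilityMeasure T] :
    BddAbove (Set.range fun B : {s : Set X // MeasurableSet s} =>
      |(S B.1).toReal - (T B.1).toReal|) := by
  refine ⟨2, fun y hy => ?_⟩
  obtain ⟨B, rfl⟩ := hy
  have h1 : (S B.1).toReal ≤ 1 := by
    simpa using ENNReal.toReal_mono (by simp) (prob_le_one (μ := S) (s := B.1))
  have h2 : (T B.1).toReal ≤ 1 := by
    simpa using ENNReal.toReal_mono (by simp) (prob_le_one (μ := T) (s := B.1))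
  have := ENNReal.toReal_nonneg (a := S B.1)
  have := ENNReal.toReal_nonneg (a := T B.1)
  rw [abs_le]; constructor <;> linarith

lemma L1dist_nonneg_s5 {X : Type*} [MeasurableSpace X] (S T : Measure X)
    [IsProbabilityMeasure S] [IsProbabilityMeasure T] : 0 ≤ L1dist S T := by
  have h := le_ciSup (bdd_sup S T) ⟨(∅ : Set X), MeasurableSet.empty⟩
  simp only [measure_empty] at h
  have h' : (0:ℝ) ≤ ⨆ B : {s : Set X // MeasurableSet s}, |(S B.1).toReal - (T B.1).toReal| := by
    simpa using h
  unfold L1dist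
  linarith

lemma integrable_of_bdd {X : Type*} [MeasurableSpace X] (μ : Measure X)
    [IsProbabilityMeasure μ] (g : X → ℝ) (hg : Measurable g)
    (hg01 : ∀ x, g x ∈ Icc (0:ℝ) 1) : Integrable g μ := by
  refine Integrable.mono' (integrable_const 1) hg.aestronglyMeasurable ?_
  filter_upwards with x
  have h1 := (hg01 x).1
  have h2 := (hg01 x).2
  rw [Real.norm_eq_abs, abs_le]
  constructor <;> linarith

lemma key {X : Type*} [MeasurableSpace X] (S T : Measure X)
    [IsProbabilityMeasure S] [IsProbabilityMeasure T] (g : X → ℝ)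
    (hg : Measurable g) (hg01 : ∀ x, g x ∈ Icc (0:ℝ) 1) :
    ∫ x, g x ∂T ≤ ∫ x, g x ∂S + L1dist S T := by
  have hTint := integrable_of_bdd T g hg hg01
  have hSint := integrable_of_bdd S g hg hg01
  have hTn : 0 ≤ᵐ[T] g := Filter.Eventually.of_forall fun x => (hg01 x).1
  have hSn : 0 ≤ᵐ[S] g := Filter.Eventually.of_forall fun x => (hg01 x).1
  have hTb : g ≤ᵐ[T] (fun _ => (1:ℝ)) := Filter.Eventually.of_forall fun x => (hg01 x).2
  have hSb : g ≤ᵐ[S] (fun _ => (1:ℝ)) := Filter.Eventually.of_forall fun x => (hg01 x).2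
  rw [hTint.integral_eq_integral_Ioc_meas_le hTn hTb,
      hSint.integral_eq_integral_Ioc_meas_le hSn hSb]
  -- F t := (T {a | t ≤ g a}).toReal, G t := (S ..).toReal
  set F : ℝ → ℝ := fun t => (T {a | t ≤ g a}).toReal with hF
  set G : ℝ → ℝ := fun t => (S {a | t ≤ g a}).toReal with hG
  have hFanti : Antitone F := fun s t hst =>
    ENNReal.toReal_mono (measure_ne_top _ _) (measure_mono fun a ha => hst.trans ha)
  have hGanti : Antitone G := fun s t hst =>
    ENNReal.toReal_mono (measure_ne_top _ _) (measure_mono fun a ha => hst.trans ha)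
  have hFint : IntegrableOn F (Ioc (0:ℝ) 1) := by
    refine Integrable.mono' (integrable_const 1) hFanti.measurable.aestronglyMeasurable ?_
    filter_upwards with t
    rw [Real.norm_eq_abs, abs_of_nonneg ENNReal.toReal_nonneg]
    simpa using ENNReal.toReal_mono (by simp) (prob_le_one (μ := T) (s := {a | t ≤ g a}))
  have hGint : IntegrableOn G (Ioc (0:ℝ) 1) := by
    refine Integrable.mono' (integrable_const 1) hGanti.measurable.aestronglyMeasurable ?_
    filter_upwards with t
    rw [Real.norm_eq_abs, abs_of_nonneg ENNReal.toReal_nonneg]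
    simpa using ENNReal.toReal_mono (by simp) (prob_le_one (μ := S) (s := {a | t ≤ g a}))
  have hdiff : (∫ t in Ioc (0:ℝ) 1, F t) - ∫ t in Ioc (0:ℝ) 1, G t
      = ∫ t in Ioc (0:ℝ) 1, (F t - G t) := (integral_sub hFint hGint).symm
  have hbound : ∀ t ∈ Ioc (0:ℝ) 1, F t - G t ≤ L1dist S T := by
    intro t _
    have hle := le_ciSup (bdd_sup S T) ⟨{a | t ≤ g a}, hg measurableSet_Ici⟩
    have habs : F t - G t ≤ |(S {a | t ≤ g a}).toReal - (T {a | t ≤ g a}).toReal| := by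
      rw [abs_sub_comm]; exact le_abs_self _
    have hnn : (0:ℝ) ≤ ⨆ B : {s : Set X // MeasurableSet s},
        |(S B.1).toReal - (T B.1).toReal| :=
      le_trans (abs_nonneg _) (le_ciSup (bdd_sup S T) ⟨(∅:Set X), MeasurableSet.empty⟩)
    unfold L1dist
    calc F t - G t ≤ _ := habs.trans hle
    _ ≤ _ := by linarith
  have hmono : ∫ t in Ioc (0:ℝ) 1, (F t - G t) ≤ ∫ t in Ioc (0:ℝ) 1, L1dist S T := by
    refine setIntegral_mono_on (hFint.sub hGint) (integrableOn_const (by simp))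
      measurableSet_Ioc hbound
  have hconst : ∫ t in Ioc (0:ℝ) 1, L1dist S T = L1dist S T := by
    simp [Measure.restrict_apply, Real.volume_Ioc]
  have hfin := hmono.trans_eq hconst
  show (∫ t in Ioc (0:ℝ) 1, F t) ≤ (∫ t in Ioc (0:ℝ) 1, G t) + L1dist S T
  linarith

lemma abs_sub_mem_Icc {a b : ℝ} (ha : a ∈ Icc (0:ℝ) 1) (hb : b ∈ Icc (0:ℝ) 1) :
    |a - b| ∈ Icc (0:ℝ) 1 := by
  obtain ⟨ha1, ha2⟩ := ha
  obtain ⟨hb1, hb2⟩ := hb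
  constructor
  · exact abs_nonneg _
  · rw [abs_le]; constructor <;> linarith

theorem stmt_5 {X : Type*} [MeasurableSpace X] {K : ℕ}
    (S : Measure X) (Sk T : Fin K → Measure X)
    [∀ k, IsProbabilityMeasure (Sk k)] [∀ k, IsProbabilityMeasure (T k)]
    (h : X → ℝ) (fsk f : Fin K → X → ℝ)
    (hh : Measurable h) (hfsk : ∀ k, Measurable (fsk k)) (hf : ∀ k, Measurable (f k))
    (hh01 : ∀ x, h x ∈ Icc (0:ℝ) 1) (hfsk01 : ∀ k x, fsk k x ∈ Icc (0:ℝ) 1)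
    (hf01 : ∀ k x, f k x ∈ Icc (0:ℝ) 1)
    (lam : Fin K → ℝ) (hlam : ∀ k, 0 ≤ lam k) (hlam1 : ∑ k, lam k = 1)
    (hS : S = ∑ k, ENNReal.ofReal (lam k) • Sk k) :
    ∑ k, lam k * ∫ x, |h x - f k x| ∂(T k) ≤
      ∑ k, lam k * ∫ x, |h x - fsk k x| ∂(Sk k) +
      ∑ k, lam k * L1dist (Sk k) (T k) +
        min (∑ k, lam k * ∫ x, |fsk k x - f k x| ∂(Sk k))
            (∑ k, lam k * ∫ x, |fsk k x - f k x| ∂(T k)) := by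
  have mhf : ∀ k, Measurable fun x => |h x - f k x| := fun k => (hh.sub (hf k)).abs
  have mhfsk : ∀ k, Measurable fun x => |h x - fsk k x| := fun k => (hh.sub (hfsk k)).abs
  have mfskf : ∀ k, Measurable fun x => |fsk k x - f k x| := fun k => ((hfsk k).sub (hf k)).abs
  have ihf : ∀ k x, |h x - f k x| ∈ Icc (0:ℝ) 1 :=
    fun k x => abs_sub_mem_Icc (hh01 x) (hf01 k x)
  have ihfsk : ∀ k x, |h x - fsk k x| ∈ Icc (0:ℝ) 1 :=
    fun k x => abs_sub_mem_Icc (hh01 x) (hfsk01 k x)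
  have ifskf : ∀ k x, |fsk k x - f k x| ∈ Icc (0:ℝ) 1 :=
    fun k x => abs_sub_mem_Icc (hfsk01 k x) (hf01 k x)
  -- triangle at the integral level, for any probability measure μ
  have tri : ∀ (k : Fin K) (μ : Measure X) [IsProbabilityMeasure μ],
      ∫ x, |h x - f k x| ∂μ ≤ (∫ x, |h x - fsk k x| ∂μ) + ∫ x, |fsk k x - f k x| ∂μ := by
    intro k μ _
    have h1 := integrable_of_bdd μ _ (mhfsk k) (ihfsk k)
    have h2 := integrable_of_bdd μ _ (mfskf k) (ifskf k)
    calc ∫ x, |h x - f k x| ∂μ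
        ≤ ∫ x, (|h x - fsk k x| + |fsk k x - f k x|) ∂μ := by
          refine integral_mono (integrable_of_bdd μ _ (mhf k) (ihf k)) (h1.add h2) ?_
          intro x
          have := abs_sub_le (h x) (fsk k x) (f k x)
          simpa using this
      _ = _ := integral_add h1 h2
  have branch1 : ∀ k, ∫ x, |h x - f k x| ∂(T k) ≤
      (∫ x, |h x - fsk k x| ∂(Sk k)) + L1dist (Sk k) (T k)
        + ∫ x, |fsk k x - f k x| ∂(Sk k) := by
    intro k
    have h1 := key (Sk k) (T k) _ (mhf k) (ihf k)
    have h2 := tri k (Sk k)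
    linarith
  have branch2 : ∀ k, ∫ x, |h x - f k x| ∂(T k) ≤
      (∫ x, |h x - fsk k x| ∂(Sk k)) + L1dist (Sk k) (T k)
        + ∫ x, |fsk k x - f k x| ∂(T k) := by
    intro k
    have h1 := key (Sk k) (T k) _ (mhfsk k) (ihfsk k)
    have h2 := tri k (T k)
    linarith
  rcases le_total (∑ k, lam k * ∫ x, |fsk k x - f k x| ∂(Sk k))
      (∑ k, lam k * ∫ x, |fsk k x - f k x| ∂(T k)) with hcd | hcd
  · rw [min_eq_left hcd]
    calc ∑ k, lam k * ∫ x, |h x - f k x| ∂(T k)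
        ≤ ∑ k, lam k * ((∫ x, |h x - fsk k x| ∂(Sk k)) + L1dist (Sk k) (T k)
            + ∫ x, |fsk k x - f k x| ∂(Sk k)) :=
          Finset.sum_le_sum fun k _ => mul_le_mul_of_nonneg_left (branch1 k) (hlam k)
      _ = _ := by simp [mul_add, Finset.sum_add_distrib]
  · rw [min_eq_right hcd]
    calc ∑ k, lam k * ∫ x, |h x - f k x| ∂(T k)
        ≤ ∑ k, lam k * ((∫ x, |h x - fsk k x| ∂(Sk k)) + L1dist (Sk k) (T k)
            + ∫ x, |fsk k x - f k x| ∂(T k)) :=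
          Finset.sum_le_sum fun k _ => mul_le_mul_of_nonneg_left (branch2 k) (hlam k)
      _ = _ := by simp [mul_add, Finset.sum_add_distrib]
end
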